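/- Fix integers v ≥ 1 and block sizes p₀, p₁, …, p_v ≥ 1 with p = p₀ + p₁ + ⋯ + p_v, partitioning the coordinates of ℝ^p into consecutive blocks of sizes p₁, …, p_v, p₀ (the last block, indexed 0, is the noise block). Fix a finite nonempty set 𝒯 of lags and real numbers λ_{τj} for τ ∈ 𝒯, j = 0, 1, …, v, with λ_{τ0} = 0 for all τ ∈ 𝒯, and let D_τ = diag(λ_{τ1}I_{p₁}, …, λ_{τv}I_{p_v}, λ_{τ0}I_{p₀}) ∈ ℝ^{p×p}. Assume (i) for every k = 1, …, v there exists τ ∈ 𝒯 with λ_{τk} ≠ 0, and (ii) for all distinct j, k ∈ {1, …, v} there exists τ ∈ 𝒯 with λ_{τj} ≠ λ_{τk}. Then an orthogonal matrix W ∈ ℝ^{p×p} maximizes g over the set of all orthogonal p×p matrices if and only if there exists a permutation matrix P ∈ ℝ^{p×p} such that WP is block diagonal with diagonal blocks of sizes p₁, …, p_v, p₀ conforming to the partition (in which case each diagonal block is itself an orthogonal matrix). -/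

import Mathlib

open MeasureTheory Filter Matrix Finset
open scoped Topology ENNReal NNReal Kronecker

noncomputable section

/-- Squared Frobenius norm of a real matrix. -/
def frobSq {ι κ : Type*} [Fintype ι] [Fintype κ] (M : Matrix ι κ ℝ) : ℝ :=
  ∑ i, ∑ j, (M i j) ^ 2

/-- Frobenius norm of a real matrix. -/
def frobNorm {ι κ : Type*} [Fintype ι] [Fintype κ] (M : Matrix ι κ ℝ) : ℝ :=
  Real.sqrt (frobSq M)

/-- Euclidean norm of a vector. -/
def euclNorm {ι : Type*} [Fintype ι] (x : ι → ℝ) : ℝ :=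
  Real.sqrt (∑ i, (x i) ^ 2)

/-- `X_T = O_p(1)` (boundedness in probability), matrix version, Frobenius norm. -/
def MatIsOp {Ω ι κ : Type*} [MeasurableSpace Ω] [Fintype ι] [Fintype κ]
    (μ : Measure Ω) (X : ℕ → Ω → Matrix ι κ ℝ) : Prop :=
  ∀ ε : ℝ, 0 < ε → ∃ M : ℝ, 0 < M ∧ ∀ T, μ {ω | M < frobNorm (X T ω)} ≤ ENNReal.ofReal ε

/-- `X_T = O_p(1)` (boundedness in probability), vector version, Euclidean norm. -/
def VecIsOp {Ω ι : Type*} [MeasurableSpace Ω] [Fintype ι]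
    (μ : Measure Ω) (X : ℕ → Ω → ι → ℝ) : Prop :=
  ∀ ε : ℝ, 0 < ε → ∃ M : ℝ, 0 < M ∧ ∀ T, μ {ω | M < euclNorm (X T ω)} ≤ ENNReal.ofReal ε

/-- Convergence to zero in probability, matrix version (Frobenius norm). -/
def MatTendstoP0 {Ω ι κ : Type*} [MeasurableSpace Ω] [Fintype ι] [Fintype κ]
    (μ : Measure Ω) (X : ℕ → Ω → Matrix ι κ ℝ) : Prop :=
  ∀ ε : ℝ, 0 < ε → Tendsto (fun T => μ {ω | ε < frobNorm (X T ω)}) atTop (𝓝 0)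

/-- Convergence to zero in probability, real-valued version. -/
def RealTendstoP0 {Ω : Type*} [MeasurableSpace Ω]
    (μ : Measure Ω) (X : ℕ → Ω → ℝ) : Prop :=
  ∀ ε : ℝ, 0 < ε → Tendsto (fun T => μ {ω | ε < |X T ω|}) atTop (𝓝 0)

/-- Convergence in distribution: weak convergence of the laws to the measure `ν`. -/
def TendstoInDist {Ω E : Type*} [MeasurableSpace Ω] [MeasurableSpace E] [TopologicalSpace E]
    (μ : Measure Ω) (X : ℕ → Ω → E) (ν : Measure E) : Prop :=
  ∀ f : BoundedContinuousFunction E ℝ,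
    Tendsto (fun T => ∫ ω, f (X T ω) ∂μ) atTop (𝓝 (∫ x, f x ∂ν))

open Classical in
/-- The centered (possibly degenerate) Gaussian distribution `N(0, V)` on `ι → ℝ`,
realized as the law of `V^{1/2} z` with `z` standard Gaussian. -/
def gaussianOfCov {ι : Type*} [Fintype ι] [DecidableEq ι] (V : Matrix ι ι ℝ) :
    Measure (ι → ℝ) :=
  if h : V.PosSemidef then
    Measure.map (fun z => ((h.1.eigenvectorUnitary : Matrix ι ι ℝ) *
        diagonal ((↑) ∘ (√·) ∘ h.1.eigenvalues : ι → ℝ) *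
        (star h.1.eigenvectorUnitary : Matrix ι ι ℝ)).mulVec z)
      (Measure.pi fun _ : ι => ProbabilityTheory.gaussianReal 0 1)
  else 0

/-- Chi-squared distribution with `k` degrees of freedom: Gamma, shape `k/2`, rate `1/2`. -/
def chiSq (k : ℝ) : Measure ℝ := ProbabilityTheory.gammaMeasure (k / 2) (1 / 2)

open Classical in
/-- Inverse of the unique symmetric positive definite square root of `S`
(junk value `0` if `S` is not positive definite). -/
def invSqrt {ι : Type*} [Fintype ι] [DecidableEq ι] (S : Matrix ι ι ℝ) : Matrix ι ι ℝ :=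
  if h : S.PosDef then ((h.posSemidef.1.eigenvectorUnitary : Matrix ι ι ℝ) *
    diagonal ((↑) ∘ (√·) ∘ h.posSemidef.1.eigenvalues : ι → ℝ) *
    (star h.posSemidef.1.eigenvectorUnitary : Matrix ι ι ℝ))⁻¹ else 0

/-- Column-vectorization of an `r × r` matrix, indexed by (column, row) pairs. -/
def vecM {r : ℕ} (M : Matrix (Fin r) (Fin r) ℝ) : Fin r × Fin r → ℝ :=
  fun q => M q.2 q.1

/-- The commutation matrix `K_rr = ∑ i j, E_r^{ij} ⊗ E_r^{ji}`. -/
def commMatrix (r : ℕ) : Matrix (Fin r × Fin r) (Fin r × Fin r) ℝ :=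
  ∑ i : Fin r, ∑ j : Fin r, single i j (1 : ℝ) ⊗ₖ single j i (1 : ℝ)

/-- The matrix `D_rr = ∑ i, E_r^{ii} ⊗ E_r^{ii}`. -/
def dblDiagMatrix (r : ℕ) : Matrix (Fin r × Fin r) (Fin r × Fin r) ℝ :=
  ∑ i : Fin r, single i i (1 : ℝ) ⊗ₖ single i i (1 : ℝ)

/-- The all-ones matrix `J_r`. -/
def onesMat (r : ℕ) : Matrix (Fin r) (Fin r) ℝ := Matrix.of fun _ _ => 1


/-- Index set for `ℝ^p` partitioned into blocks of sizes `s 0, …, s v`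
(the block `Fin.last v` is the noise block, placed last). -/
abbrev BlkIdx (v : ℕ) (s : Fin (v + 1) → ℕ) : Type := (j : Fin (v + 1)) × Fin (s j)

/-- The `(i, j)` block of a matrix, relative to the block partition. -/
def blk {v : ℕ} {s : Fin (v + 1) → ℕ} (U : Matrix (BlkIdx v s) (BlkIdx v s) ℝ)
    (i j : Fin (v + 1)) : Matrix (Fin (s i)) (Fin (s j)) ℝ :=
  Matrix.of fun a b => U ⟨i, a⟩ ⟨j, b⟩

/-- The diagonal matrix `D_τ = diag(λ_{τ1} I_{p₁}, …, λ_{τv} I_{p_v}, λ_{τ0} I_{p₀})`. -/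
def Dmat {v : ℕ} (s : Fin (v + 1) → ℕ) {ι : Type*} (lam : ι → Fin (v + 1) → ℝ) (τ : ι) :
    Matrix (BlkIdx v s) (BlkIdx v s) ℝ :=
  Matrix.diagonal fun i => lam τ i.1

/-- The SOBI objective `g(U) = ∑_τ ‖diag(Uᵀ D_τ U)‖²`. -/
def gObj {v : ℕ} (s : Fin (v + 1) → ℕ) {ι : Type*} [Fintype ι] (lam : ι → Fin (v + 1) → ℝ)
    (U : Matrix (BlkIdx v s) (BlkIdx v s) ℝ) : ℝ :=
  ∑ τ : ι, ∑ i : BlkIdx v s, ((Uᵀ * Dmat s lam τ * U) i i) ^ 2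

/-- The value `∑_{τ∈𝒯} ∑_{j=1}^{v} λ_{τj}² p_j`. -/
def gMax {v : ℕ} (s : Fin (v + 1) → ℕ) {ι : Type*} [Fintype ι]
    (lam : ι → Fin (v + 1) → ℝ) : ℝ :=
  ∑ τ : ι, ∑ j ∈ Finset.univ.erase (Fin.last v), (lam τ j) ^ 2 * (s j : ℝ)

/-! For orthogonal `U` and `D = diagonal d`, the entry `(UᵀDU)ᵢᵢ = ∑ₖ Uₖᵢ² dₖ` is a weighted mean
of the `dₖ`, the weights being the squared entries of column `i`. The variance identity gives
`(UᵀDU)ᵢᵢ² ≤ ∑ₖ Uₖᵢ² dₖ²`, with equality iff `d` is constant on the support of column `i`; as the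
rows of `U` are unit vectors too, summing over `i` gives `g(U) ≤ ∑_τ ∑ₖ d_τₖ² = g(1)`. So `W` is a
maximizer iff every column of `W` is supported where `k ↦ (d_τₖ)_τ` is constant, that is, inside a
single block, because (i), (ii) and `λ_τ0 = 0` make the vectors `(λ_τj)_τ` pairwise distinct.
Counting squared entries block by block shows that exactly `p_j` columns of `W` live in block `j`,
so a permutation of the columns makes `W` block diagonal. -/

theorem sq_sum_mul_add_sum_mul_sq_sub {n : Type*} [Fintype n] (w x : n → ℝ) (hw : ∑ k, w k = 1) :
    (∑ k, w k * x k) ^ 2 + ∑ k, w k * (x k - ∑ k', w k' * x k') ^ 2 = ∑ k, w k * x k ^ 2 := by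
  set m := ∑ k', w k' * x k'
  have hexpand : ∀ k, w k * (x k - m) ^ 2 = w k * x k ^ 2 - 2 * m * (w k * x k) + m ^ 2 * w k :=
    fun k => by ring
  simp only [hexpand, Finset.sum_add_distrib, Finset.sum_sub_distrib, ← Finset.mul_sum, hw]
  ring

namespace Matrix

variable {n : Type*} [Fintype n] [DecidableEq n] {U : Matrix n n ℝ}

theorem sum_sq_col_eq_one (hU : Uᵀ * U = 1) (i : n) : ∑ k, U k i ^ 2 = 1 := by
  simpa [sq, mul_apply] using congr_fun₂ hU i i

theorem sum_sq_row_eq_one (hU : Uᵀ * U = 1) (k : n) : ∑ i, U k i ^ 2 = 1 := by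
  simpa [sq, mul_apply] using congr_fun₂ (mul_eq_one_comm.mp hU : U * Uᵀ = 1) k k

theorem mul_permMatrix_apply {R : Type*} [NonAssocSemiring R] (M : Matrix n n R)
    (σ : Equiv.Perm n) (a b : n) : (M * σ.permMatrix R) a b = M a (σ.symm b) := by
  rw [PEquiv.mul_toMatrix_toPEquiv, submatrix_apply, id]

theorem transpose_permMatrix_mul_self (σ : Equiv.Perm n) :
    (σ.permMatrix ℝ)ᵀ * σ.permMatrix ℝ = 1 := by
  rw [transpose_permMatrix, ← permMatrix_mul, mul_inv_cancel, permMatrix_one]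

theorem transpose_mul_self_mul_permMatrix (hU : Uᵀ * U = 1) (σ : Equiv.Perm n) :
    (U * σ.permMatrix ℝ)ᵀ * (U * σ.permMatrix ℝ) = 1 := by
  rw [transpose_mul, Matrix.mul_assoc, ← Matrix.mul_assoc Uᵀ, hU, Matrix.one_mul,
    transpose_permMatrix_mul_self]

theorem transpose_mul_diagonal_mul_apply_self (d : n → ℝ) (i : n) :
    (Uᵀ * diagonal d * U) i i = ∑ k, U k i ^ 2 * d k := by
  rw [Matrix.mul_assoc, mul_apply]
  simp only [diagonal_mul, transpose_apply]
  exact Finset.sum_congr rfl fun k _ => by ring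

theorem transpose_mul_diagonal_mul_apply_self_eq (hU : Uᵀ * U = 1) {d : n → ℝ} {i : n} {c : ℝ}
    (hd : ∀ k, U k i ≠ 0 → d k = c) : (Uᵀ * diagonal d * U) i i = c := by
  have hterm : ∀ k, U k i ^ 2 * d k = U k i ^ 2 * c := fun k => by
    by_cases hk : U k i = 0
    · simp [hk]
    · rw [hd k hk]
  simp only [transpose_mul_diagonal_mul_apply_self, hterm, ← Finset.sum_mul,
    sum_sq_col_eq_one hU, one_mul]

theorem sum_sq_conj_diagonal_add_defect (hU : Uᵀ * U = 1) (d : n → ℝ) :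
    ∑ i, ((Uᵀ * diagonal d * U) i i) ^ 2 +
        ∑ i, ∑ k, U k i ^ 2 * (d k - (Uᵀ * diagonal d * U) i i) ^ 2 = ∑ k, d k ^ 2 := by
  have hcol : ∀ i, ((Uᵀ * diagonal d * U) i i) ^ 2 +
      ∑ k, U k i ^ 2 * (d k - (Uᵀ * diagonal d * U) i i) ^ 2 = ∑ k, U k i ^ 2 * d k ^ 2 :=
    fun i => by
      simpa only [transpose_mul_diagonal_mul_apply_self] using
        sq_sum_mul_add_sum_mul_sq_sub (U · i ^ 2) d (sum_sq_col_eq_one hU i)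
  rw [← Finset.sum_add_distrib, Finset.sum_congr rfl fun i _ => hcol i, Finset.sum_comm]
  simp only [← Finset.sum_mul, sum_sq_row_eq_one hU, one_mul]

theorem sum_sq_conj_diagonal_le (hU : Uᵀ * U = 1) (d : n → ℝ) :
    ∑ i, ((Uᵀ * diagonal d * U) i i) ^ 2 ≤ ∑ k, d k ^ 2 := by
  rw [← sum_sq_conj_diagonal_add_defect hU d, le_add_iff_nonneg_right]
  positivity

theorem sum_sq_conj_diagonal_eq_iff (hU : Uᵀ * U = 1) (d : n → ℝ) :
    ∑ i, ((Uᵀ * diagonal d * U) i i) ^ 2 = ∑ k, d k ^ 2 ↔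
      ∀ i k k', U k i ≠ 0 → U k' i ≠ 0 → d k = d k' := by
  rw [← sum_sq_conj_diagonal_add_defect hU d, left_eq_add,
    Finset.sum_eq_zero_iff_of_nonneg fun i _ => by positivity]
  simp only [Finset.mem_univ, forall_const]
  constructor
  · intro h i k k' hk hk'
    have hmean : ∀ k, U k i ≠ 0 → d k = (Uᵀ * diagonal d * U) i i := fun k hk => by
      have := (Finset.sum_eq_zero_iff_of_nonneg fun k _ => by positivity).mp (h i) k
        (Finset.mem_univ k)
      simpa [hk, sub_eq_zero] using this
    rw [hmean k hk, hmean k' hk']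
  · intro h i
    refine Finset.sum_eq_zero fun k _ => ?_
    by_cases hk : U k i = 0
    · simp [hk]
    · rw [transpose_mul_diagonal_mul_apply_self_eq hU fun k' hk' => h i k' k hk' hk]
      simp

theorem sum_sq_conj_diagonal_mul_permMatrix (d : n → ℝ) (σ : Equiv.Perm n) :
    ∑ i, (((U * σ.permMatrix ℝ)ᵀ * diagonal d * (U * σ.permMatrix ℝ)) i i) ^ 2 =
      ∑ i, ((Uᵀ * diagonal d * U) i i) ^ 2 := by
  simp only [transpose_mul_diagonal_mul_apply_self, mul_permMatrix_apply]
  exact Equiv.sum_comp σ.symm fun i => (∑ k, U k i ^ 2 * d k) ^ 2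

variable {κ : Type*} [DecidableEq κ]

theorem card_fiber_eq_of_orthogonal (hU : Uᵀ * U = 1) {c φ : n → κ}
    (hφ : ∀ k i, U k i ≠ 0 → c k = φ i) (j : κ) :
    #{i | φ i = j} = #{k | c k = j} := by
  have hcol : ∀ i, ∑ k with c k = j, U k i ^ 2 = if φ i = j then 1 else 0 := fun i => by
    have hterm : ∀ k, (if c k = j then U k i ^ 2 else 0) = if φ i = j then U k i ^ 2 else 0 :=
      fun k => by
        by_cases hk : U k i = 0
        · simp [hk]
        · rw [hφ k i hk]
    rw [Finset.sum_filter, Finset.sum_congr rfl fun k _ => hterm k]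
    split_ifs
    · exact sum_sq_col_eq_one hU i
    · simp
  have hcount : (#{i | φ i = j} : ℝ) = #{k | c k = j} := calc
    (#{i | φ i = j} : ℝ) = ∑ i, ∑ k with c k = j, U k i ^ 2 := by
      simp only [hcol, Finset.sum_boole]
    _ = ∑ k with c k = j, ∑ i, U k i ^ 2 := Finset.sum_comm
    _ = #{k | c k = j} := by simp [sum_sq_row_eq_one hU]
  exact_mod_cast hcount

theorem exists_perm_mul_permMatrix_eq_zero (hU : Uᵀ * U = 1) (c : n → κ)
    (hc : ∀ i k k', U k i ≠ 0 → U k' i ≠ 0 → c k = c k') :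
    ∃ σ : Equiv.Perm n, ∀ a b, c a ≠ c b → (U * σ.permMatrix ℝ) a b = 0 := by
  have hsupp : ∀ i, ∃ k, U k i ≠ 0 := fun i => by
    by_contra! h
    simpa [h] using sum_sq_col_eq_one hU i
  choose r hr using hsupp
  have hφ : ∀ k i, U k i ≠ 0 → c k = c (r i) := fun k i hk => hc i k (r i) hk (hr i)
  have e : ∀ j, {k // c k = j} ≃ {i // c (r i) = j} := fun j => Fintype.equivOfCardEq <| by
    simp only [Fintype.card_subtype, card_fiber_eq_of_orthogonal hU hφ j]
  refine ⟨(Equiv.ofFiberEquiv e).symm, fun a b hab => ?_⟩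
  rw [mul_permMatrix_apply, Equiv.symm_symm]
  by_contra hne
  exact hab ((hφ a _ hne).trans (Equiv.ofFiberEquiv_map e b))

end Matrix

section Blocks

variable {v : ℕ} {s : Fin (v + 1) → ℕ}

open Matrix in
theorem blk_transpose_mul_self {V : Matrix (BlkIdx v s) (BlkIdx v s) ℝ} (hV : Vᵀ * V = 1)
    (hoff : ∀ a b : BlkIdx v s, a.1 ≠ b.1 → V a b = 0) (j : Fin (v + 1)) :
    (blk V j j)ᵀ * blk V j j = 1 := by
  have hV_eq : V = blockDiagonal' fun j => blk V j j := by
    ext ⟨i, a⟩ ⟨k, b⟩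
    by_cases hik : i = k
    · subst hik
      rw [blockDiagonal'_apply_eq, blk, of_apply]
    · rw [blockDiagonal'_apply_ne _ _ _ hik, hoff _ _ hik]
  rw [hV_eq, blockDiagonal'_transpose, ← blockDiagonal'_mul, ← blockDiagonal'_one] at hV
  exact congr_fun (blockDiagonal'_injective hV) j

theorem injective_swap_of_separating {ι : Type*} {lam : ι → Fin (v + 1) → ℝ}
    (hlam0 : ∀ τ, lam τ (Fin.last v) = 0) (hsig : ∀ k, k ≠ Fin.last v → ∃ τ, lam τ k ≠ 0)
    (hsep : ∀ j k, j ≠ Fin.last v → k ≠ Fin.last v → j ≠ k → ∃ τ, lam τ j ≠ lam τ k) :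
    Function.Injective (Function.swap lam) := by
  intro j k hjk
  by_contra hne
  have hlam : ∀ τ, lam τ j = lam τ k := congr_fun hjk
  by_cases hj : j = Fin.last v
  · obtain ⟨τ, hτ⟩ := hsig k fun hk => hne (hj.trans hk.symm)
    exact hτ (by rw [← hlam, hj, hlam0])
  by_cases hk : k = Fin.last v
  · obtain ⟨τ, hτ⟩ := hsig j hj
    exact hτ (by rw [hlam, hk, hlam0])
  obtain ⟨τ, hτ⟩ := hsep j k hj hk hne
  exact hτ (hlam τ)

variable {ι : Type*} [Fintype ι] {lam : ι → Fin (v + 1) → ℝ}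
  {U : Matrix (BlkIdx v s) (BlkIdx v s) ℝ}

theorem gObj_le_sum_sq (hU : Uᵀ * U = 1) :
    gObj s lam U ≤ ∑ τ, ∑ k : BlkIdx v s, lam τ k.1 ^ 2 :=
  Finset.sum_le_sum fun _ _ => Matrix.sum_sq_conj_diagonal_le hU _

theorem gObj_eq_sum_sq_iff (hU : Uᵀ * U = 1) :
    gObj s lam U = ∑ τ, ∑ k : BlkIdx v s, lam τ k.1 ^ 2 ↔
      ∀ i k k', U k i ≠ 0 → U k' i ≠ 0 → ∀ τ, lam τ k.1 = lam τ k'.1 := by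
  simp only [gObj, Dmat]
  rw [Finset.sum_eq_sum_iff_of_le fun _ _ => Matrix.sum_sq_conj_diagonal_le hU _]
  simp only [Finset.mem_univ, forall_const, Matrix.sum_sq_conj_diagonal_eq_iff hU]
  exact ⟨fun h i k k' hk hk' τ => h τ i k k' hk hk', fun h τ i k k' hk hk' => h i k k' hk hk' τ⟩

theorem gObj_mul_permMatrix (σ : Equiv.Perm (BlkIdx v s)) :
    gObj s lam (U * σ.permMatrix ℝ) = gObj s lam U :=
  Finset.sum_congr rfl fun _ _ => Matrix.sum_sq_conj_diagonal_mul_permMatrix _ σ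

end Blocks

theorem statement10_general (v : ℕ) (s : Fin (v + 1) → ℕ)
    {ι : Type*} [Fintype ι]
    (lam : ι → Fin (v + 1) → ℝ) (hlam0 : ∀ τ, lam τ (Fin.last v) = 0)
    (hsig : ∀ k, k ≠ Fin.last v → ∃ τ, lam τ k ≠ 0)
    (hsep : ∀ j k, j ≠ Fin.last v → k ≠ Fin.last v → j ≠ k → ∃ τ, lam τ j ≠ lam τ k)
    (W : Matrix (BlkIdx v s) (BlkIdx v s) ℝ) (hWorth : Wᵀ * W = 1) :
    (∀ U : Matrix (BlkIdx v s) (BlkIdx v s) ℝ, Uᵀ * U = 1 → gObj s lam U ≤ gObj s lam W) ↔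
      ∃ σ : Equiv.Perm (BlkIdx v s),
        (∀ a b : BlkIdx v s, a.1 ≠ b.1 → (W * σ.permMatrix ℝ) a b = 0) ∧
        ∀ j, (blk (W * σ.permMatrix ℝ) j j)ᵀ * blk (W * σ.permMatrix ℝ) j j = 1 := by
  constructor
  · intro hmax
    have hone : gObj s lam 1 = ∑ τ, ∑ k : BlkIdx v s, lam τ k.1 ^ 2 := by
      refine (gObj_eq_sum_sq_iff (by simp)).2 fun i k k' hk hk' _ => ?_
      rw [of_not_not (mt Matrix.one_apply_ne hk), of_not_not (mt Matrix.one_apply_ne hk')]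
    have hW : gObj s lam W = ∑ τ, ∑ k : BlkIdx v s, lam τ k.1 ^ 2 :=
      (gObj_le_sum_sq hWorth).antisymm (hone ▸ hmax 1 (by simp))
    obtain ⟨σ, hσ⟩ := Matrix.exists_perm_mul_permMatrix_eq_zero hWorth Sigma.fst
      fun i k k' hk hk' =>
        injective_swap_of_separating hlam0 hsig hsep
          (funext ((gObj_eq_sum_sq_iff hWorth).1 hW i k k' hk hk'))
    exact ⟨σ, hσ, blk_transpose_mul_self (Matrix.transpose_mul_self_mul_permMatrix hWorth σ) hσ⟩
  · rintro ⟨σ, hoff, -⟩ U hU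
    have hblock : ∀ a b, (W * σ.permMatrix ℝ) a b ≠ 0 → a.1 = b.1 := fun a b =>
      not_imp_comm.1 (hoff a b)
    calc gObj s lam U ≤ ∑ τ, ∑ k : BlkIdx v s, lam τ k.1 ^ 2 := gObj_le_sum_sq hU
      _ = gObj s lam (W * σ.permMatrix ℝ) := by
        refine ((gObj_eq_sum_sq_iff (Matrix.transpose_mul_self_mul_permMatrix hWorth σ)).2
          fun i k k' hk hk' _ => ?_).symm
        rw [hblock k i hk, hblock k' i hk']
      _ = gObj s lam W := gObj_mul_permMatrix σ

theorem statement10 (v : ℕ) (hv : 1 ≤ v) (s : Fin (v + 1) → ℕ) (hs : ∀ j, 1 ≤ s j)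
    {ι : Type*} [Fintype ι] [Nonempty ι]
    (lam : ι → Fin (v + 1) → ℝ) (hlam0 : ∀ τ, lam τ (Fin.last v) = 0)
    (hsig : ∀ k, k ≠ Fin.last v → ∃ τ, lam τ k ≠ 0)
    (hsep : ∀ j k, j ≠ Fin.last v → k ≠ Fin.last v → j ≠ k → ∃ τ, lam τ j ≠ lam τ k)
    (W : Matrix (BlkIdx v s) (BlkIdx v s) ℝ) (hWorth : Wᵀ * W = 1) :
    (∀ U : Matrix (BlkIdx v s) (BlkIdx v s) ℝ, Uᵀ * U = 1 → gObj s lam U ≤ gObj s lam W) ↔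
      ∃ σ : Equiv.Perm (BlkIdx v s),
        (∀ a b : BlkIdx v s, a.1 ≠ b.1 → (W * σ.permMatrix ℝ) a b = 0) ∧
        ∀ j, (blk (W * σ.permMatrix ℝ) j j)ᵀ * blk (W * σ.permMatrix ℝ) j j = 1 :=
  statement10_general v s lam hlam0 hsig hsep W hWorth
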